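/- Let ν be a probability measure and for b ∈ L²(ν) with ‖b‖_{L²(ν)} bounded, define the path ν_t by dν_t/dν = k(t b)/∫ k(t b) dν, where k(y) = 2/(1+e^{-2y}). Then each ν_t is a probability measure, and the map t ↦ ∫ ζ dν_t is differentiable at t = 0 for any ζ ∈ L²(ν) with derivative ∫ ζ (b − ∫ b dν) dν; in particular if ∫ b dν = 0 the derivative equals ⟨ζ, b⟩_{L²(ν)}. -/

import Mathlib

/-!
The density `k(t b) / ∫ k(t b) dν` is positive and integrates to one, so each `ν_t` is a
probability measure, and `∫ ζ dν_t = (∫ ζ k(t b) dν) / (∫ k(t b) dν)`. Since `k(0) = 1` and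
`k' = k (2 - k) = 1 - (1 - k)²` lies in `[0, 1]` with `k'(0) = 1`, the integrands of numerator
and denominator have `t`-derivatives dominated by `|ζ b|` and `|b|`, which are integrable because
`ζ, b ∈ L²(ν)`. Differentiating under the integral sign gives derivatives `∫ ζ b dν` and
`∫ b dν` at `0`, and the quotient rule gives `∫ ζ b dν - ∫ ζ dν · ∫ b dν`.
-/

open MeasureTheory

noncomputable def kfun (y : ℝ) : ℝ := 2 / (1 + Real.exp (-2 * y))

/-- The path `t ↦ ν_t` with `dν_t/dν = k(t b) / ∫ k(t b) dν`. -/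
noncomputable def pathMeasure (ν : Measure ℝ) (b : ℝ → ℝ) (t : ℝ) : Measure ℝ :=
  ν.withDensity (fun x => ENNReal.ofReal (kfun (t * b x) / ∫ y, kfun (t * b y) ∂ν))

section DerivIntegral

variable {α : Type*} [MeasurableSpace α] {μ : Measure α}

theorem hasDerivAt_integral_mul_comp_mul {φ φ' : ℝ → ℝ} {C : ℝ}
    (hφ : ∀ y, HasDerivAt φ (φ' y) y) (hφ' : ∀ y, |φ' y| ≤ C)
    {ζ b : α → ℝ} (hζ : Integrable ζ μ) (hb : AEStronglyMeasurable b μ)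
    (hζb : Integrable (fun x => ζ x * b x) μ) :
    HasDerivAt (fun t => ∫ x, ζ x * φ (t * b x) ∂μ) (φ' 0 * ∫ x, ζ x * b x ∂μ) 0 := by
  have hφc : Continuous φ := continuous_iff_continuousAt.2 fun y => (hφ y).continuousAt
  have hF_meas : ∀ t : ℝ, AEStronglyMeasurable (fun x => ζ x * φ (t * b x)) μ := fun t =>
    hζ.aestronglyMeasurable.mul (hφc.comp_aestronglyMeasurable (hb.const_mul t))
  have hF'_meas : AEStronglyMeasurable (fun x => φ' (0 * b x) * (ζ x * b x)) μ := by
    simpa only [zero_mul] using hζb.aestronglyMeasurable.const_mul (φ' 0)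
  have hF'_le : ∀ᵐ x ∂μ, ∀ t ∈ Set.univ, ‖φ' (t * b x) * (ζ x * b x)‖ ≤ C * |ζ x * b x| := by
    filter_upwards with x t _
    rw [Real.norm_eq_abs, abs_mul]
    exact mul_le_mul_of_nonneg_right (hφ' _) (abs_nonneg _)
  have hF' : ∀ᵐ x ∂μ, ∀ t ∈ Set.univ,
      HasDerivAt (fun t => ζ x * φ (t * b x)) (φ' (t * b x) * (ζ x * b x)) t := by
    filter_upwards with x t _
    exact (((hφ _).comp t (hasDerivAt_mul_const (b x))).const_mul (ζ x)).congr_deriv (by ring)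
  have key := (hasDerivAt_integral_of_dominated_loc_of_deriv_le Filter.univ_mem
    (Filter.Eventually.of_forall hF_meas) (by simpa only [zero_mul] using hζ.mul_const (φ 0))
    hF'_meas hF'_le (hζb.abs.const_mul C) hF').2
  simpa only [zero_mul, integral_const_mul] using key

theorem integral_withDensity_ofReal_div {f : α → ℝ} (hf : AEMeasurable f μ) (hf0 : ∀ x, 0 ≤ f x)
    {c : ℝ} (hc : 0 ≤ c) (g : α → ℝ) :
    ∫ x, g x ∂(μ.withDensity fun x => ENNReal.ofReal (f x / c)) = (∫ x, g x * f x ∂μ) / c := by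
  rw [integral_withDensity_eq_integral_toReal_smul₀ (hf.div_const c).ennreal_ofReal
    (Filter.Eventually.of_forall fun _ => ENNReal.ofReal_lt_top), ← integral_div]
  congr 1 with x
  rw [ENNReal.toReal_ofReal (div_nonneg (hf0 x) hc), smul_eq_mul]
  ring

end DerivIntegral

theorem kfun_pos (y : ℝ) : 0 < kfun y := by
  unfold kfun; positivity

theorem kfun_le_two (y : ℝ) : kfun y ≤ 2 := by
  unfold kfun
  rw [div_le_iff₀ (by positivity)]
  nlinarith [Real.exp_pos (-2 * y)]

theorem kfun_zero : kfun 0 = 1 := by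
  norm_num [kfun]

theorem hasDerivAt_kfun (y : ℝ) : HasDerivAt kfun (kfun y * (2 - kfun y)) y := by
  have hd : HasDerivAt (fun y => 1 + Real.exp (-2 * y)) (Real.exp (-2 * y) * -2) y :=
    (((hasDerivAt_id y).const_mul (-2)).exp.const_add 1).congr_deriv (by simp [mul_comm])
  have hpos : 0 < 1 + Real.exp (-2 * y) := by positivity
  refine ((hasDerivAt_const y (2 : ℝ)).div hd hpos.ne').congr_deriv ?_
  unfold kfun
  field_simp
  ring

theorem abs_kfun_mul_two_sub_kfun_le_one (y : ℝ) : |kfun y * (2 - kfun y)| ≤ 1 := by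
  have h0 := (kfun_pos y).le
  have h2 := kfun_le_two y
  rw [abs_of_nonneg (mul_nonneg h0 (by linarith))]
  nlinarith [sq_nonneg (kfun y - 1)]

theorem continuous_kfun : Continuous kfun :=
  continuous_iff_continuousAt.2 fun y => (hasDerivAt_kfun y).continuousAt

section Integral

variable {α : Type*} [MeasurableSpace α] {μ : Measure α} [IsFiniteMeasure μ] {b : α → ℝ}

theorem integrable_kfun_comp_mul (hb : AEStronglyMeasurable b μ) (t : ℝ) :
    Integrable (fun x => kfun (t * b x)) μ :=
  (integrable_const (2 : ℝ)).mono' (continuous_kfun.comp_aestronglyMeasurable (hb.const_mul t))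
    (Filter.Eventually.of_forall fun x => by
      rw [Real.norm_eq_abs, abs_of_pos (kfun_pos _)]; exact kfun_le_two _)

theorem integral_kfun_comp_mul_pos [NeZero μ] (hb : AEStronglyMeasurable b μ) (t : ℝ) :
    0 < ∫ x, kfun (t * b x) ∂μ := by
  rw [integral_pos_iff_support_of_nonneg (fun _ => (kfun_pos _).le)
    (integrable_kfun_comp_mul hb t), Function.support_eq_univ fun _ => (kfun_pos _).ne']
  simpa using NeZero.ne μ

end Integral

section Path

variable {ν : Measure ℝ} [IsProbabilityMeasure ν] {b : ℝ → ℝ}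

theorem isProbabilityMeasure_pathMeasure (hb : AEStronglyMeasurable b ν) (t : ℝ) :
    IsProbabilityMeasure (pathMeasure ν b t) := by
  have hC := integral_kfun_comp_mul_pos hb t
  constructor
  rw [pathMeasure, withDensity_apply _ MeasurableSet.univ, Measure.restrict_univ,
    ← ofReal_integral_eq_lintegral_ofReal ((integrable_kfun_comp_mul hb t).div_const _)
      (Filter.Eventually.of_forall fun _ => div_nonneg (kfun_pos _).le hC.le),
    integral_div, div_self hC.ne', ENNReal.ofReal_one]

theorem integral_pathMeasure (hb : AEStronglyMeasurable b ν) (t : ℝ) (ζ : ℝ → ℝ) :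
    ∫ x, ζ x ∂(pathMeasure ν b t) = (∫ x, ζ x * kfun (t * b x) ∂ν) / ∫ x, kfun (t * b x) ∂ν :=
  integral_withDensity_ofReal_div (integrable_kfun_comp_mul hb t).aemeasurable
    (fun _ => (kfun_pos _).le) (integral_kfun_comp_mul_pos hb t).le ζ

theorem hasDerivAt_integral_pathMeasure_zero (hb : Integrable b ν) {ζ : ℝ → ℝ} (hζ : Integrable ζ ν)
    (hζb : Integrable (fun x => ζ x * b x) ν) :
    HasDerivAt (fun t => ∫ x, ζ x ∂(pathMeasure ν b t))
      ((∫ x, ζ x * b x ∂ν) - (∫ x, ζ x ∂ν) * ∫ x, b x ∂ν) 0 := by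
  have hnum := hasDerivAt_integral_mul_comp_mul hasDerivAt_kfun
    abs_kfun_mul_two_sub_kfun_le_one hζ hb.aestronglyMeasurable hζb
  have hden := hasDerivAt_integral_mul_comp_mul hasDerivAt_kfun abs_kfun_mul_two_sub_kfun_le_one
    (integrable_const 1) hb.aestronglyMeasurable (by simpa only [one_mul] using hb)
  simp only [one_mul] at hden
  rw [funext (integral_pathMeasure hb.aestronglyMeasurable · ζ)]
  refine (hnum.div hden (by simp [kfun_zero])).congr_deriv ?_
  norm_num [kfun_zero]

end Path

/-- Each `ν_t` is a probability measure, and `t ↦ ∫ ζ dν_t` is differentiable at 0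
with derivative `∫ ζ (b − ∫ b dν) dν`; in particular it equals `⟨ζ, b⟩_{L²(ν)}` when
`b` is centered. -/
theorem path_probability_and_derivative
    (ν : Measure ℝ) [IsProbabilityMeasure ν]
    (b : ℝ → ℝ) (hb : MemLp b 2 ν) :
    (∀ t : ℝ, IsProbabilityMeasure (pathMeasure ν b t)) ∧
    (∀ ζ : ℝ → ℝ, MemLp ζ 2 ν →
      HasDerivAt (fun t => ∫ x, ζ x ∂(pathMeasure ν b t))
        (∫ x, ζ x * (b x - ∫ y, b y ∂ν) ∂ν) 0 ∧
      ((∫ y, b y ∂ν) = 0 →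
        HasDerivAt (fun t => ∫ x, ζ x ∂(pathMeasure ν b t))
          (∫ x, ζ x * b x ∂ν) 0)) := by
  refine ⟨isProbabilityMeasure_pathMeasure hb.aestronglyMeasurable, fun ζ hζ => ?_⟩
  have hζb : Integrable (fun x => ζ x * b x) ν := hζ.integrable_mul hb
  have hderiv := hasDerivAt_integral_pathMeasure_zero (hb.integrable one_le_two)
    (hζ.integrable one_le_two) hζb
  have hcentered : ∫ x, ζ x * (b x - ∫ y, b y ∂ν) ∂ν
      = (∫ x, ζ x * b x ∂ν) - (∫ x, ζ x ∂ν) * ∫ y, b y ∂ν := by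
    simp only [mul_sub]
    rw [integral_sub hζb ((hζ.integrable one_le_two).mul_const _), integral_mul_const]
  refine ⟨hcentered ▸ hderiv, fun hmean => ?_⟩
  simpa only [hmean, mul_zero, sub_zero] using hderiv
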